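/- Let G = (V,E) be a finite simple graph and p ≥ 1. For sets T ⊆ R ⊆ V and a node j ∈ T, Δ_j(T) ≤ Δ_j(R), where Δ_j(S) = d_j(S)^p + Σ_{i ∈ N(j)∩S, i≠j} (d_i(S)^p − (d_i(S)−1)^p). -/

import Mathlib

/-! Every term of `Δ_j` grows from `T` to `R`: `d_j` grows with the set, the neighbours of `j` in
`T` are among those in `R`, and each neighbour `i` of `j` has `d_i ≥ 1`, where the increment
`x ↦ x^p - (x - 1)^p` of the convex map `x ↦ x^p` is nonnegative and nondecreasing. -/

/-- Induced degree: `d_v(S)` is the number of neighbors of `v` lying in `S`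
if `v ∈ S`, and `0` otherwise. -/
noncomputable def indDeg {V : Type*} [DecidableEq V] (G : SimpleGraph V)
    (S : Finset V) (v : V) : ℕ :=
  if v ∈ S then Nat.card {u : V // u ∈ S ∧ G.Adj v u} else 0

/-- `Δ_j(S) = d_j(S)^p + Σ_{i ∈ N(j)∩S} (d_i(S)^p − (d_i(S)−1)^p)`
(note `j ∉ N(j)` since the graph is simple). -/
noncomputable def DeltaP {V : Type*} [DecidableEq V] (G : SimpleGraph V)
    [DecidableRel G.Adj] (p : ℝ) (S : Finset V) (j : V) : ℝ :=
  (indDeg G S j : ℝ) ^ p +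
    ∑ i ∈ S.filter (fun i => G.Adj j i ∧ i ≠ j),
      ((indDeg G S i : ℝ) ^ p - ((indDeg G S i : ℝ) - 1) ^ p)

open Finset

theorem ConvexOn.sub_le_sub_of_le {𝕜 : Type*} [Field 𝕜] [LinearOrder 𝕜] [IsStrictOrderedRing 𝕜]
    {s : Set 𝕜} {f : 𝕜 → 𝕜} (hf : ConvexOn 𝕜 s f) {a b h : 𝕜} (hh : 0 ≤ h) (hab : a ≤ b)
    (ha : a - h ∈ s) (hb : b ∈ s) : f a - f (a - h) ≤ f b - f (b - h) := by
  rcases hh.eq_or_lt with rfl | hh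
  · simp
  have hle : a - h ≤ b - h := by linarith
  have ha' : a ∈ s := hf.1.ordConnected.out ha hb ⟨by linarith, hab⟩
  have hb' : b - h ∈ s := hf.1.ordConnected.out ha hb ⟨hle, by linarith⟩
  -- Both increments are compared with the secant slope of `f` from `a - h` to `b`.
  have left : (f a - f (a - h)) / h ≤ (f b - f (a - h)) / (b - (a - h)) := by
    simpa using hf.secant_mono ha ha' hb (by linarith) (by linarith) hab
  have right : (f b - f (a - h)) / (b - (a - h)) ≤ (f b - f (b - h)) / h := by
    have := hf.secant_mono hb ha hb' (by linarith) (by linarith) hle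
    rwa [← neg_div_neg_eq, ← neg_div_neg_eq (f (b - h) - f b), neg_sub, neg_sub, neg_sub, neg_sub,
      sub_sub_cancel] at this
  have := left.trans right
  rwa [div_le_div_iff_of_pos_right hh] at this

theorem Real.rpow_sub_rpow_sub_one_le {p : ℝ} (hp : 1 ≤ p) {a b : ℝ} (ha : 1 ≤ a) (hab : a ≤ b) :
    a ^ p - (a - 1) ^ p ≤ b ^ p - (b - 1) ^ p :=
  (convexOn_rpow hp).sub_le_sub_of_le zero_le_one hab (Set.mem_Ici.2 (by linarith))
    (Set.mem_Ici.2 (by linarith))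

section indDeg

variable {V : Type*} [DecidableEq V] (G : SimpleGraph V) [DecidableRel G.Adj]

theorem indDeg_of_mem {S : Finset V} {v : V} (hv : v ∈ S) :
    indDeg G S v = #{u ∈ S | G.Adj v u} := by
  rw [indDeg, if_pos hv, ← Nat.card_eq_finsetCard]
  simp only [Finset.mem_filter]

variable {G}

theorem indDeg_mono {T R : Finset V} (hTR : T ⊆ R) (v : V) : indDeg G T v ≤ indDeg G R v := by
  by_cases hv : v ∈ T
  · rw [indDeg_of_mem G hv, indDeg_of_mem G (hTR hv)]
    exact card_le_card (filter_subset_filter _ hTR)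
  · simp [indDeg, hv]

theorem one_le_indDeg {S : Finset V} {i j : V} (hi : i ∈ S) (hj : j ∈ S) (hij : G.Adj i j) :
    1 ≤ indDeg G S i := by
  rw [indDeg_of_mem G hi, Nat.one_le_iff_ne_zero, Ne, card_eq_zero, filter_eq_empty_iff]
  exact fun h => h hj hij

end indDeg

theorem DeltaP_mono_general {V : Type*} [DecidableEq V]
    (G : SimpleGraph V) [DecidableRel G.Adj] (p : ℝ) (hp : 1 ≤ p)
    (T R : Finset V) (hTR : T ⊆ R) (j : V) (hj : j ∈ T) :
    DeltaP G p T j ≤ DeltaP G p R j := by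
  unfold DeltaP
  gcongr ?_ + ?_
  · exact Real.rpow_le_rpow (Nat.cast_nonneg _) (mod_cast indDeg_mono hTR j) (by linarith)
  calc ∑ i ∈ T with G.Adj j i ∧ i ≠ j, ((indDeg G T i : ℝ) ^ p - ((indDeg G T i : ℝ) - 1) ^ p)
      ≤ ∑ i ∈ T with G.Adj j i ∧ i ≠ j, ((indDeg G R i : ℝ) ^ p - ((indDeg G R i : ℝ) - 1) ^ p) :=
        sum_le_sum fun i hi => Real.rpow_sub_rpow_sub_one_le hp
          (mod_cast one_le_indDeg (mem_filter.1 hi).1 hj (mem_filter.1 hi).2.1.symm)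
          (mod_cast indDeg_mono hTR i)
    _ ≤ ∑ i ∈ R with G.Adj j i ∧ i ≠ j, ((indDeg G R i : ℝ) ^ p - ((indDeg G R i : ℝ) - 1) ^ p) :=
        sum_le_sum_of_subset_of_nonneg (filter_subset_filter _ hTR) fun i hi _ =>
          have hdeg : (1 : ℝ) ≤ indDeg G R i :=
            mod_cast one_le_indDeg (mem_filter.1 hi).1 (hTR hj) (mem_filter.1 hi).2.1.symm
          sub_nonneg.2 <| Real.rpow_le_rpow (by linarith) (by linarith) (by linarith)

theorem DeltaP_mono {V : Type*} [Fintype V] [DecidableEq V]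
    (G : SimpleGraph V) [DecidableRel G.Adj] (p : ℝ) (hp : 1 ≤ p)
    (T R : Finset V) (hTR : T ⊆ R) (j : V) (hj : j ∈ T) :
    DeltaP G p T j ≤ DeltaP G p R j :=
  DeltaP_mono_general G p hp T R hTR j hj
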